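/- arXiv:2002.07025 — 2 statements merged into one kernel-verified Lean document; each statement's English description precedes it below -/
import Mathlib

section
/- (Determinacy of finite turn-based reachability games.) In a finite turn-based game arena with target set F ⊆ S, for every state s ∈ S exactly one of the following holds: (i) Player 1 can force reaching F from s within some number of steps (equivalently, s ∈ Win); or (ii) there exists a set W ⊆ S \ F with s ∈ W such that every s' ∈ W ∩ S₂ has some a ∈ A with T(s',a) ∈ W, and every s' ∈ W ∩ S₁ has T(s',a) ∈ W for every a ∈ A (so Player 2 has a strategy keeping the play inside W, hence outside F, forever). In particular s ∉ Win if and only if such a set W exists. -/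
/-!
Player 1's winning region `win` is the union of the attractors `CanForce k`, which increase
with `k`. A trap of Player 2 avoiding `F` meets no attractor, by induction on `k`. Conversely,
the complement of `win` is such a trap: a Player-1 state with a move into `win`, or a Player-2
state all of whose finitely many moves lead into `win`, lies in `win` itself, because finitely
many attractor levels have a common upper bound.
-/

/-- `CanForce S1 S2 T F k s` : Player 1 can force reaching `F` from `s` within `k` steps. -/
def CanForce {S A : Type*} (S1 S2 : Set S) (T : S → A → S) (F : Set S) : ℕ → S → Prop
  | 0, s => s ∈ F
  | k + 1, s =>
      s ∈ F ∨ (s ∈ S1 ∧ ∃ a, CanForce S1 S2 T F k (T s a)) ∨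
        (s ∈ S2 ∧ ∀ a, CanForce S1 S2 T F k (T s a))

section Reachability

variable {S A : Type*} {S1 S2 : Set S} {T : S → A → S} {F : Set S}

theorem CanForce.succ {k : ℕ} {s : S} (h : CanForce S1 S2 T F k s) :
    CanForce S1 S2 T F (k + 1) s := by
  induction k generalizing s with
  | zero => exact Or.inl h
  | succ k ih =>
    rcases h with hF | ⟨hs1, a, ha⟩ | ⟨hs2, ha⟩
    · exact Or.inl hF
    · exact Or.inr (Or.inl ⟨hs1, a, ih ha⟩)
    · exact Or.inr (Or.inr ⟨hs2, fun a => ih (ha a)⟩)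

theorem CanForce.mono {k j : ℕ} (hkj : k ≤ j) {s : S} (h : CanForce S1 S2 T F k s) :
    CanForce S1 S2 T F j s := by
  induction j, hkj using Nat.le_induction with
  | base => exact h
  | succ j _ ih => exact ih.succ

variable (S1 S2 T F)

def win : Set S := {s | ∃ k, CanForce S1 S2 T F k s}

def IsTrap (W : Set S) : Prop :=
  W ⊆ Fᶜ ∧ (∀ s ∈ W ∩ S2, ∃ a, T s a ∈ W) ∧ (∀ s ∈ W ∩ S1, ∀ a, T s a ∈ W)

variable {S1 S2 T F}

theorem subset_win : F ⊆ win S1 S2 T F := fun _ hs => ⟨0, hs⟩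

theorem mem_win_of_move_mem {s : S} (hs : s ∈ S1) {a : A} (ha : T s a ∈ win S1 S2 T F) :
    s ∈ win S1 S2 T F := by
  obtain ⟨k, hk⟩ := ha
  exact ⟨k + 1, Or.inr (Or.inl ⟨hs, a, hk⟩)⟩

theorem mem_win_of_forall_move_mem [Finite A] {s : S} (hs : s ∈ S2)
    (ha : ∀ a, T s a ∈ win S1 S2 T F) : s ∈ win S1 S2 T F := by
  choose k hk using ha
  obtain ⟨K, hK⟩ := (Set.finite_range k).bddAbove
  exact ⟨K + 1, Or.inr (Or.inr ⟨hs, fun a => (hk a).mono (hK ⟨a, rfl⟩)⟩)⟩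

theorem IsTrap.not_canForce {W : Set S} (hW : IsTrap S1 S2 T F W) (k : ℕ) {s : S}
    (hs : s ∈ W) : ¬ CanForce S1 S2 T F k s := by
  obtain ⟨hWF, h2, h1⟩ := hW
  induction k generalizing s with
  | zero => exact hWF hs
  | succ k ih =>
    rintro (hF | ⟨hs1, a, ha⟩ | ⟨hs2, ha⟩)
    · exact hWF hs hF
    · exact ih (h1 s ⟨hs, hs1⟩ a) ha
    · obtain ⟨a, haW⟩ := h2 s ⟨hs, hs2⟩
      exact ih haW (ha a)

theorem isTrap_compl_win [Finite A] : IsTrap S1 S2 T F (win S1 S2 T F)ᶜ := by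
  refine ⟨Set.compl_subset_compl.mpr subset_win, ?_, ?_⟩
  · rintro s ⟨hs, hs2⟩
    by_contra! h
    exact hs (mem_win_of_forall_move_mem hs2 fun a => not_not.mp (h a))
  · rintro s ⟨hs, hs1⟩ a ha
    exact hs (mem_win_of_move_mem hs1 ha)

theorem not_mem_win_iff_exists_isTrap [Finite A] {s : S} :
    s ∉ win S1 S2 T F ↔ ∃ W, IsTrap S1 S2 T F W ∧ s ∈ W :=
  ⟨fun hs => ⟨_, isTrap_compl_win, hs⟩,
    fun ⟨_, hW, hs⟩ ⟨k, hk⟩ => hW.not_canForce k hs hk⟩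

end Reachability

theorem reachability_determinacy_general {S A : Type*}
    [Fintype A] (S1 S2 : Set S)
    (T : S → A → S) (F : Set S) :
    ∀ s : S,
      Xor' (∃ k : ℕ, CanForce S1 S2 T F k s)
        (∃ W : Set S, W ⊆ Fᶜ ∧ s ∈ W ∧
          (∀ s' ∈ W ∩ S2, ∃ a : A, T s' a ∈ W) ∧
          (∀ s' ∈ W ∩ S1, ∀ a : A, T s' a ∈ W)) ∧
      (¬ (∃ k : ℕ, CanForce S1 S2 T F k s) ↔
        (∃ W : Set S, W ⊆ Fᶜ ∧ s ∈ W ∧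
          (∀ s' ∈ W ∩ S2, ∃ a : A, T s' a ∈ W) ∧
          (∀ s' ∈ W ∩ S1, ∀ a : A, T s' a ∈ W))) := by
  intro s
  have key : ¬ (∃ k, CanForce S1 S2 T F k s) ↔
      ∃ W : Set S, W ⊆ Fᶜ ∧ s ∈ W ∧
        (∀ s' ∈ W ∩ S2, ∃ a : A, T s' a ∈ W) ∧ (∀ s' ∈ W ∩ S1, ∀ a : A, T s' a ∈ W) :=
    not_mem_win_iff_exists_isTrap.trans
      ⟨fun ⟨W, ⟨hF, h2, h1⟩, hs⟩ => ⟨W, hF, hs, h2, h1⟩,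
        fun ⟨W, hF, hs, h2, h1⟩ => ⟨W, ⟨hF, h2, h1⟩, hs⟩⟩
  exact ⟨xor_iff_not_iff'.mpr key, key⟩

/-- Determinacy of finite turn-based reachability games: for every state `s` exactly one
of the following holds: (i) Player 1 can force reaching `F` from `s` within some number of
steps; or (ii) there is a Player-2 trap `W ⊆ S \ F` containing `s` (every Player-2 state
of `W` has an action staying in `W`, and every Player-1 state of `W` stays in `W` under
every action). In particular `s ∉ Win` iff such a `W` exists. -/
theorem reachability_determinacy {S A : Type*} [Fintype S] [Nonempty S]
    [Fintype A] [Nonempty A] (S1 S2 : Set S)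
    (hpart : S1 ∪ S2 = Set.univ) (hdisj : Disjoint S1 S2)
    (T : S → A → S) (F : Set S) :
    ∀ s : S,
      Xor' (∃ k : ℕ, CanForce S1 S2 T F k s)
        (∃ W : Set S, W ⊆ Fᶜ ∧ s ∈ W ∧
          (∀ s' ∈ W ∩ S2, ∃ a : A, T s' a ∈ W) ∧
          (∀ s' ∈ W ∩ S1, ∀ a : A, T s' a ∈ W)) ∧
      (¬ (∃ k : ℕ, CanForce S1 S2 T F k s) ↔
        (∃ W : Set S, W ⊆ Fᶜ ∧ s ∈ W ∧
          (∀ s' ∈ W ∩ S2, ∃ a : A, T s' a ∈ W) ∧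
          (∀ s' ∈ W ∩ S1, ∀ a : A, T s' a ∈ W))) :=
  reachability_determinacy_general S1 S2 T F
end

section
/- (Final lemma, co-safe case, path-wise form.) In a finite turn-based game arena, let π̂₂ be a set-based Player-2 strategy with π̂₂(s) nonempty for every s ∈ S₂, and let F ⊆ S. Let Ŵin and l̂evel denote the attractor and level function of Player 1 in the π̂₂-induced subgame. If s₀ ∈ Ŵin, then there exists a memoryless strategy π : S₁ → A such that every play s₀ s₁ s₂ … from s₀ in which, for all i, sᵢ ∈ S₁ and sᵢ ∉ F implies s_{i+1} = T(sᵢ, π(sᵢ)), and sᵢ ∈ S₂ implies the action taken lies in π̂₂(sᵢ), visits F within l̂evel(s₀) steps, i.e., there is i ≤ l̂evel(s₀) with sᵢ ∈ F. In particular, Player 1's winning strategy against the set-based strategy π̂₂ wins against every Player-2 behavior whose actions are always chosen from the sets π̂₂(s) (e.g., any randomized strategy whose support at each history equals π̂₂ of the current state). -/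
/-- Player 1's attractor sequence of target `F` in the subgame induced by the set-based
Player-2 strategy `π₂`: `Ẑ₀ = F`,
`Ẑ_{k+1} = Ẑ_k ∪ {s ∈ S₁ | ∃ a, T s a ∈ Ẑ_k} ∪ {s ∈ S₂ | ∀ a ∈ π₂ s, T s a ∈ Ẑ_k}`. -/
def attrSeqSub {S A : Type*} (S1 S2 : Set S) (T : S → A → S) (π₂ : S → Set A)
    (F : Set S) : ℕ → Set S
  | 0 => F
  | k + 1 =>
      attrSeqSub S1 S2 T π₂ F k ∪
        {s | s ∈ S1 ∧ ∃ a, T s a ∈ attrSeqSub S1 S2 T π₂ F k} ∪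
        {s | s ∈ S2 ∧ ∀ a ∈ π₂ s, T s a ∈ attrSeqSub S1 S2 T π₂ F k}

/-- Player 1's winning region in the `π₂`-induced subgame. -/
def attrWinSub {S A : Type*} (S1 S2 : Set S) (T : S → A → S) (π₂ : S → Set A)
    (F : Set S) : Set S :=
  ⋃ k : ℕ, attrSeqSub S1 S2 T π₂ F k

/-- Level function in the `π₂`-induced subgame. -/
noncomputable def attrLevelSub {S A : Type*} (S1 S2 : Set S) (T : S → A → S)
    (π₂ : S → Set A) (F : Set S) (s : S) : ℕ :=
  sInf {k : ℕ | s ∈ attrSeqSub S1 S2 T π₂ F k}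

/-- Co-safe case of the final lemma, path-wise: if `s₀` is in Player 1's winning region of
the subgame induced by a nonempty set-based Player-2 strategy `π₂`, then Player 1 has a
memoryless strategy `π` such that every play from `s₀` following `π` at Player-1 states
outside `F` and whose Player-2 actions are always drawn from `π₂` visits `F` within
`level(s₀)` steps. -/
theorem deceptive_cosafe_winning {S A : Type*} [Fintype S] [Nonempty S]
    [Fintype A] [Nonempty A] (S1 S2 : Set S)
    (hpart : S1 ∪ S2 = Set.univ) (hdisj : Disjoint S1 S2)
    (T : S → A → S) (π₂ : S → Set A) (hne : ∀ s ∈ S2, (π₂ s).Nonempty)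
    (F : Set S) (s₀ : S) (hwin : s₀ ∈ attrWinSub S1 S2 T π₂ F) :
    ∃ π : S → A,
      ∀ play : ℕ → S, play 0 = s₀ →
        (∀ i : ℕ, ∃ a : A, T (play i) a = play (i + 1)) →
        (∀ i : ℕ, play i ∈ S1 → play i ∉ F → play (i + 1) = T (play i) (π (play i))) →
        (∀ i : ℕ, play i ∈ S2 → ∃ a ∈ π₂ (play i), T (play i) a = play (i + 1)) →
        ∃ i ≤ attrLevelSub S1 S2 T π₂ F s₀, play i ∈ F := by
  classical
  set Z := attrSeqSub S1 S2 T π₂ F with hZ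
  set lvl := attrLevelSub S1 S2 T π₂ F with hlvl
  have hmono : ∀ {k m : ℕ}, k ≤ m → Z k ⊆ Z m := by
    intro k m h
    induction h with
    | refl => exact fun _ h => h
    | step _ ih => exact fun s hs => Or.inl (Or.inl (ih hs))
  have hmemlvl : ∀ s, s ∈ attrWinSub S1 S2 T π₂ F → s ∈ Z (lvl s) := by
    intro s hs
    rcases Set.mem_iUnion.mp hs with ⟨k, hk⟩
    exact Nat.sInf_mem (show {k : ℕ | s ∈ Z k}.Nonempty from ⟨k, hk⟩)
  have hlvl_le : ∀ s k, s ∈ Z k → lvl s ≤ k := fun s k h => Nat.sInf_le h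
  -- the strategy
  set π : S → A := fun s =>
    if h : ∃ a, T s a ∈ Z (lvl s - 1) then h.choose else Classical.arbitrary A with hπ
  refine ⟨π, ?_⟩
  -- key claim by strong induction on the bound
  have key : ∀ n : ℕ, ∀ play : ℕ → S, play 0 ∈ attrWinSub S1 S2 T π₂ F →
      lvl (play 0) ≤ n →
      (∀ i : ℕ, play i ∈ S1 → play i ∉ F → play (i + 1) = T (play i) (π (play i))) →
      (∀ i : ℕ, play i ∈ S2 → ∃ a ∈ π₂ (play i), T (play i) a = play (i + 1)) →
      ∃ i ≤ lvl (play 0), play i ∈ F := by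
    intro n
    induction n with
    | zero =>
      intro play hw hle _ _
      have h0 : play 0 ∈ Z 0 := by
        have := hmemlvl _ hw
        rwa [Nat.le_zero.mp hle] at this
      exact ⟨0, Nat.zero_le _, h0⟩
    | succ n ih =>
      intro play hw hle h1 h2
      by_cases hF : play 0 ∈ F
      · exact ⟨0, Nat.zero_le _, hF⟩
      · -- lvl (play 0) = m + 1 for some m
        have hmem : play 0 ∈ Z (lvl (play 0)) := hmemlvl _ hw
        have hpos : lvl (play 0) ≠ 0 := by
          intro h0
          rw [h0] at hmem
          exact hF hmem
        obtain ⟨m, hm⟩ := Nat.exists_eq_succ_of_ne_zero hpos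
        have hnot : play 0 ∉ Z m := by
          intro h
          have := hlvl_le _ _ h
          omega
        rw [hm] at hmem
        have hstep : play 1 ∈ Z m := by
          rcases hmem with (h | h) | h
          · exact absurd h hnot
          · -- Player 1 state
            obtain ⟨hs1, hex⟩ := h
            have hF' : play 0 ∉ F := hF
            have heq := h1 0 hs1 hF'
            have hex' : ∃ a, T (play 0) a ∈ Z (lvl (play 0) - 1) := by
              rw [hm]; simpa using hex
            have : T (play 0) (π (play 0)) ∈ Z (lvl (play 0) - 1) := by
              rw [hπ]; simp only [dif_pos hex']; exact hex'.choose_spec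
            rw [hm] at this
            simpa [heq] using this
          · obtain ⟨hs2, hall⟩ := h
            obtain ⟨a, ha, haeq⟩ := h2 0 hs2
            rw [← haeq]
            exact hall a ha
        -- apply IH to the shifted play
        have hw1 : play 1 ∈ attrWinSub S1 S2 T π₂ F := Set.mem_iUnion.mpr ⟨m, hstep⟩
        have hlvl1 : lvl (play 1) ≤ m := hlvl_le _ _ hstep
        have hm_le : m ≤ n := by omega
        obtain ⟨i, hi, hiF⟩ := ih (fun j => play (j + 1)) hw1 (le_trans hlvl1 hm_le)
          (fun i => h1 (i + 1)) (fun i => h2 (i + 1))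
        simp only [Nat.zero_add] at hi
        exact ⟨i + 1, by omega, hiF⟩
  intro play hp0 _ h1 h2
  have hw : play 0 ∈ attrWinSub S1 S2 T π₂ F := by rw [hp0]; exact hwin
  obtain ⟨i, hi, hiF⟩ := key (lvl (play 0)) play hw (le_refl _) h1 h2
  exact ⟨i, by rw [← hp0]; exact hi, hiF⟩
end
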